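/- There exists a threshold model (A, N, B_0, θ) such that the non-inflating update rule produces a 2-cycle: B_0 = B_2 ≠ B_1. Hence the non-inflating dynamics need not reach a fixed point. -/

import Mathlib

open Finset
open scoped Classical

variable {α : Type*}

noncomputable def nbhd [Fintype α] (N : α → α → Prop) (a : α) : Finset α :=
  Finset.univ.filter (fun b => N a b)

noncomputable def frac [Fintype α] (N : α → α → Prop) (B : Finset α) (a : α) : ℝ :=
  ((nbhd N a ∩ B).card : ℝ) / ((nbhd N a).card : ℝ)

noncomputable def infl [Fintype α] (N : α → α → Prop) (θ : ℝ) (B : Finset α) : Finset α :=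
  B ∪ Finset.univ.filter (fun a => θ ≤ frac N B a)

noncomputable def noninfl [Fintype α] (N : α → α → Prop) (θ : ℝ) (B : Finset α) : Finset α :=
  Finset.univ.filter (fun a => θ < frac N B a) ∪
    Finset.univ.filter (fun a => frac N B a = θ ∧ a ∈ B)

/-!
Take a graph in which every agent has exactly one neighbour, given by a fixed-point-free
involution `σ`, and a threshold strictly between `0` and `1`. The fraction of adopting
neighbours is then always `0` or `1`, never the threshold itself, so one update step simply
pulls the adopting set back along `σ`. Applying it twice returns the original set, and any
set that is not `σ`-invariant, such as `{0}` for the swap of `Fin 2`, lies on a 2-cycle.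
-/

variable [Fintype α]

lemma nbhd_graph (σ : α → α) (a : α) : nbhd (fun a b => b = σ a) a = {σ a} := by
  ext b
  simp [nbhd]

lemma frac_graph (σ : α → α) (B : Finset α) (a : α) :
    frac (fun a b => b = σ a) B a = if σ a ∈ B then 1 else 0 := by
  by_cases h : σ a ∈ B <;> simp [frac, nbhd_graph, h]

lemma noninfl_graph (σ : α → α) {θ : ℝ} (hθ₀ : 0 < θ) (hθ₁ : θ < 1) (B : Finset α) :
    noninfl (fun a b => b = σ a) θ B = univ.filter (fun a => σ a ∈ B) := by
  ext a
  by_cases h : σ a ∈ B <;>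
    simp [noninfl, frac_graph, h, hθ₁, hθ₀.not_gt, hθ₀.ne]

lemma noninfl_noninfl_graph_of_involutive {σ : α → α} (hσ : Function.Involutive σ) {θ : ℝ}
    (hθ₀ : 0 < θ) (hθ₁ : θ < 1) (B : Finset α) :
    noninfl (fun a b => b = σ a) θ (noninfl (fun a b => b = σ a) θ B) = B := by
  ext a
  simp [noninfl_graph σ hθ₀ hθ₁, hσ a]

/-- there is a threshold model on which the non-inflating update
rule produces a 2-cycle: `B 0 = B 2 ≠ B 1`. -/
theorem noninflating_two_cycle :
    ∃ (n : ℕ) (N : Fin n → Fin n → Prop) (B0 : Finset (Fin n)) (θ : ℝ),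
      (∀ a, ¬ N a a) ∧ (∀ a b, N a b → N b a) ∧ 0 ≤ θ ∧ θ ≤ 1 ∧
      noninfl N θ (noninfl N θ B0) = B0 ∧ noninfl N θ B0 ≠ B0 := by
  have hθ₀ : (0 : ℝ) < 1 / 2 := by norm_num
  have hθ₁ : (1 / 2 : ℝ) < 1 := by norm_num
  refine ⟨2, fun a b => b = Fin.rev a, {0}, 1 / 2, by decide,
    fun a b h => by subst h; exact (Fin.rev_rev a).symm, hθ₀.le, hθ₁.le,
    noninfl_noninfl_graph_of_involutive Fin.rev_rev hθ₀ hθ₁ _, ?_⟩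
  rw [noninfl_graph _ hθ₀ hθ₁]
  intro h
  simpa using congrArg (0 ∈ ·) h
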